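/- arXiv:2408.02289 — 2 statements merged into one kernel-verified Lean document; each statement's English description precedes it below -/
import Mathlib

section
/- Let N ≥ 2, τ_l > 0, x_1 ≥ 0 and x_l ≥ 0 for l = 3, …, N, and K ∈ ℝ. Let x_2^− ≤ x̃_2 ≤ x_2^+ be reals with 1 + τ_2 x_2^− > 0, and set h̃_2 = x_2^+ − x_2^− > 0. Then the cell average of the payoff satisfies (1/h̃_2) ∫_{x_2^−}^{x_2^+} max{ g(x_1, x_2, x_3, …, x_N), 0 } dx_2 = (1/(h̃_2 (1+τ_1 x_1))) ( x_2^+ − x̃_2 − (K + (1 − H_3)/τ_2) · log( (1+τ_2 x_2^+)/(1+τ_2 x̃_2) ) ). -/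
/-!
Factoring `1/(1 + τ₁x₁)` and `1/(1 + τ₂x₂)` out of every term of `g` leaves
`τ₂(x₂ - K) + H₃ = τ₂(x₂ - x̃₂)`, so along the cell
`g = τ₂(x₂ - x̃₂) / ((1 + τ₁x₁)(1 + τ₂x₂))`. Its positive part vanishes to the left of `x̃₂`
and equals `g` to the right, where `y - ((1 + τ₂x̃₂)/τ₂) log(1 + τ₂y)` is an antiderivative.
-/

open Finset MeasureTheory

theorem sum_Icc_two_prod_Icc_one {R : Type*} [CommSemiring R] {N : ℕ} (hN : 2 ≤ N)
    (a b : ℕ → R) :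
    ∑ k ∈ Icc 2 N, (∏ l ∈ Icc 1 k, a l) * b k =
      a 1 * a 2 * (b 2 + ∑ k ∈ Icc 3 N, (∏ l ∈ Icc 3 k, a l) * b k) := by
  have hprod : ∀ k ∈ Icc 2 N, ∏ l ∈ Icc 1 k, a l = a 1 * a 2 * ∏ l ∈ Icc 3 k, a l := by
    intro k hk
    have hk : 2 ≤ k := (mem_Icc.mp hk).1
    rw [← insert_Icc_add_one_left_eq_Icc (by omega : 1 ≤ k),
      ← insert_Icc_add_one_left_eq_Icc (by omega : 1 + 1 ≤ k),
      prod_insert (by simp), prod_insert (by simp), mul_assoc]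
    rfl
  rw [sum_congr rfl fun k hk => by rw [hprod k hk, mul_assoc], ← mul_sum,
    ← insert_Icc_add_one_left_eq_Icc hN, sum_insert (by simp)]
  simp

noncomputable def relSwapPayoff (N : ℕ) (τ : ℕ → ℝ) (K : ℝ) (x : ℕ → ℝ) : ℝ :=
  ∑ k ∈ Icc 2 N, (∏ l ∈ Icc 1 k, (1 + τ l * x l)⁻¹) * (τ k * (x k - K))

theorem relSwapPayoff_update_two {N : ℕ} (hN : 2 ≤ N) (τ x : ℕ → ℝ) (K y : ℝ) :
    relSwapPayoff N τ K (Function.update x 2 y) =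
      (1 + τ 1 * x 1)⁻¹ * (1 + τ 2 * y)⁻¹ * (τ 2 * (y - K) +
        ∑ k ∈ Icc 3 N, (∏ l ∈ Icc 3 k, (1 + τ l * x l)⁻¹) * (τ k * (x k - K))) := by
  have hx : ∀ l ∈ Icc 3 N, Function.update x 2 y l = x l :=
    fun l hl => Function.update_of_ne (by simp at hl; omega) _ _
  rw [relSwapPayoff, sum_Icc_two_prod_Icc_one hN, sum_congr rfl fun k hk => by
    rw [hx k hk, prod_congr rfl fun l hl => by
      rw [hx l (Icc_subset_Icc_right (mem_Icc.mp hk).2 hl)]]]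
  simp

theorem integral_max_zero_eq_of_sign_change {f : ℝ → ℝ} {lo a b : ℝ} (hla : lo ≤ a)
    (hab : a ≤ b) (hf : ContinuousOn f (Set.Icc lo b))
    (hneg : ∀ y ∈ Set.Icc lo a, f y ≤ 0) (hpos : ∀ y ∈ Set.Icc a b, 0 ≤ f y) :
    ∫ y in lo..b, max (f y) 0 = ∫ y in a..b, f y := by
  have hmax : ContinuousOn (fun y => max (f y) 0) (Set.Icc lo b) :=
    hf.sup continuousOn_const
  have hleft : IntervalIntegrable (fun y => max (f y) 0) volume lo a :=
    (hmax.mono (Set.Icc_subset_Icc_right hab)).intervalIntegrable_of_Icc hla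
  have hright : IntervalIntegrable (fun y => max (f y) 0) volume a b :=
    (hmax.mono (Set.Icc_subset_Icc_left hla)).intervalIntegrable_of_Icc hab
  rw [← intervalIntegral.integral_add_adjacent_intervals hleft hright,
    intervalIntegral.integral_congr (g := fun _ => 0) fun y hy =>
      max_eq_right (hneg y (by rwa [Set.uIcc_of_le hla] at hy)),
    intervalIntegral.integral_congr fun y hy =>
      max_eq_left (hpos y (by rwa [Set.uIcc_of_le hab] at hy))]
  simp

theorem continuousOn_inv_one_add_mul_mul_sub {τ a : ℝ} {s : Set ℝ}
    (hs : ∀ y ∈ s, 0 < 1 + τ * y) :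
    ContinuousOn (fun y => (1 + τ * y)⁻¹ * (τ * (y - a))) s :=
  ((by fun_prop : Continuous fun y => 1 + τ * y).continuousOn.inv₀
    fun y hy => (hs y hy).ne').mul (by fun_prop)

theorem integral_inv_mul_sub_of_le {τ a b : ℝ} (hτ : τ ≠ 0) (ha : 0 < 1 + τ * a)
    (hb : 0 < 1 + τ * b) (hab : a ≤ b) :
    ∫ y in a..b, (1 + τ * y)⁻¹ * (τ * (y - a)) =
      b - a - (1 + τ * a) / τ * Real.log ((1 + τ * b) / (1 + τ * a)) := by
  have hpos : ∀ y ∈ Set.uIcc a b, 0 < 1 + τ * y := by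
    intro y hy
    rw [Set.uIcc_of_le hab] at hy
    rcases le_total 0 τ with h | h <;> nlinarith [hy.1, hy.2]
  set C := (1 + τ * a) / τ
  have hderiv : ∀ y ∈ Set.uIcc a b, HasDerivAt (fun y => y - C * Real.log (1 + τ * y))
      ((1 + τ * y)⁻¹ * (τ * (y - a))) y := by
    intro y hy
    have hlin : HasDerivAt (fun y => 1 + τ * y) τ y := by
      simpa using ((hasDerivAt_id y).const_mul τ).const_add 1
    refine ((hasDerivAt_id' y).sub ((hlin.log (hpos y hy).ne').const_mul C)).congr_deriv ?_
    have hy0 := (hpos y hy).ne'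
    simp only [C]
    field_simp
    ring
  rw [intervalIntegral.integral_eq_sub_of_hasDerivAt hderiv
      (continuousOn_inv_one_add_mul_mul_sub hpos).intervalIntegrable,
    Real.log_div hb.ne' ha.ne']
  ring

theorem integral_max_inv_mul_sub_zero {τ lo a b : ℝ} (hτ : 0 < τ) (hlo : 0 < 1 + τ * lo)
    (hla : lo ≤ a) (hab : a ≤ b) :
    ∫ y in lo..b, max ((1 + τ * y)⁻¹ * (τ * (y - a))) 0 =
      b - a - (1 + τ * a) / τ * Real.log ((1 + τ * b) / (1 + τ * a)) := by
  have hpos : ∀ y, lo ≤ y → 0 < 1 + τ * y := fun y hy => by nlinarith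
  rw [integral_max_zero_eq_of_sign_change hla hab
      (continuousOn_inv_one_add_mul_mul_sub fun y hy => hpos y hy.1)
      (fun y hy => mul_nonpos_of_nonneg_of_nonpos (inv_nonneg.2 (hpos y hy.1).le)
        (mul_nonpos_of_nonneg_of_nonpos hτ.le (by linarith [hy.2])))
      (fun y hy => mul_nonneg (inv_nonneg.2 (hpos y (hla.trans hy.1)).le)
        (mul_nonneg hτ.le (by linarith [hy.1]))),
    integral_inv_mul_sub_of_le hτ.ne' (hpos a hla) (hpos b (hla.trans hab)) hab]

theorem payoff_cell_average_general
    (N : ℕ) (hN : 2 ≤ N) (τ x : ℕ → ℝ) (K : ℝ)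
    (hτ : ∀ l, 1 ≤ l → l ≤ N → 0 < τ l)
    (hx1 : 0 ≤ x 1)
    (H3 x2tilde x2m x2p h2 : ℝ)
    (hH3 : H3 = ∑ k ∈ Finset.Icc 3 N,
        (∏ l ∈ Finset.Icc 3 k, (1 + τ l * x l)⁻¹) * (τ k * (x k - K)))
    (hx2tilde : x2tilde = K - H3 / τ 2)
    (hm : x2m ≤ x2tilde) (hp : x2tilde ≤ x2p)
    (hposm : 0 < 1 + τ 2 * x2m) :
    (1 / h2) * ∫ y in x2m..x2p,
        max (∑ k ∈ Finset.Icc 2 N,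
          (∏ l ∈ Finset.Icc 1 k, (1 + τ l * (if l = 2 then y else x l))⁻¹) *
            (τ k * ((if k = 2 then y else x k) - K))) 0 =
      (1 / (h2 * (1 + τ 1 * x 1))) *
        (x2p - x2tilde -
          (K + (1 - H3) / τ 2) * Real.log ((1 + τ 2 * x2p) / (1 + τ 2 * x2tilde))) := by
  have hτ1 : 0 < τ 1 := hτ 1 le_rfl (by omega)
  have hτ2 : 0 < τ 2 := hτ 2 (by omega) hN
  have hshift : ∀ y, τ 2 * (y - K) + H3 = τ 2 * (y - x2tilde) := fun y => by
    rw [hx2tilde]; field_simp; ring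
  have hintegrand : ∀ y, max (∑ k ∈ Finset.Icc 2 N,
      (∏ l ∈ Finset.Icc 1 k, (1 + τ l * (if l = 2 then y else x l))⁻¹) *
        (τ k * ((if k = 2 then y else x k) - K))) 0 =
      (1 + τ 1 * x 1)⁻¹ * max ((1 + τ 2 * y)⁻¹ * (τ 2 * (y - x2tilde))) 0 := fun y => by
    simp_rw [← Function.update_apply x 2 y]
    rw [← relSwapPayoff, relSwapPayoff_update_two hN, ← hH3, hshift, mul_assoc,
      mul_max_of_nonneg _ _ (by positivity), mul_zero]
  have hcoeff : (1 + τ 2 * x2tilde) / τ 2 = K + (1 - H3) / τ 2 := by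
    rw [hx2tilde]; field_simp; ring
  simp only [hintegrand]
  rw [intervalIntegral.integral_const_mul, integral_max_inv_mul_sub_zero hτ2 hposm hm hp,
    hcoeff, one_div, one_div, mul_inv]
  ring

/-- closed-form cell average of the swaption payoff `max{g, 0}`
over the cell `[x_2^-, x_2^+]` in the `x_2`-direction. -/
theorem payoff_cell_average
    (N : ℕ) (hN : 2 ≤ N) (τ x : ℕ → ℝ) (K : ℝ)
    (hτ : ∀ l, 1 ≤ l → l ≤ N → 0 < τ l)
    (hx1 : 0 ≤ x 1)
    (hx : ∀ l, 3 ≤ l → l ≤ N → 0 ≤ x l)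
    (H3 x2tilde x2m x2p h2 : ℝ)
    (hH3 : H3 = ∑ k ∈ Finset.Icc 3 N,
        (∏ l ∈ Finset.Icc 3 k, (1 + τ l * x l)⁻¹) * (τ k * (x k - K)))
    (hx2tilde : x2tilde = K - H3 / τ 2)
    (hm : x2m ≤ x2tilde) (hp : x2tilde ≤ x2p)
    (hposm : 0 < 1 + τ 2 * x2m)
    (hh2 : h2 = x2p - x2m) (hh2pos : 0 < h2) :
    (1 / h2) * ∫ y in x2m..x2p,
        max (∑ k ∈ Finset.Icc 2 N,
          (∏ l ∈ Finset.Icc 1 k, (1 + τ l * (if l = 2 then y else x l))⁻¹) *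
            (τ k * ((if k = 2 then y else x k) - K))) 0 =
      (1 / (h2 * (1 + τ 1 * x 1))) *
        (x2p - x2tilde -
          (K + (1 - H3) / τ 2) * Real.log ((1 + τ 2 * x2p) / (1 + τ 2 * x2tilde))) :=
  payoff_cell_average_general N hN τ x K hτ hx1 H3 x2tilde x2m x2p h2 hH3 hx2tilde hm hp hposm
end

section
/- Let x ∈ ℝ and h_−, h_+ > 0, and let f be three times continuously differentiable on [x − h_−, x + h_+]. Then the non-uniform central first-derivative approximation is second-order accurate: | β_{−1} f(x − h_−) + β_0 f(x) + β_1 f(x + h_+) − f'(x) | ≤ (h_− h_+ / 6) · sup_{y ∈ [x−h_−, x+h_+]} |f'''(y)|. -/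
/-!
Expand `f` to second order about `x`. Integrating the bound `|f'''| ≤ M` three times with the
mean value inequality bounds the Taylor remainder at `t` by `M |t - x|³ / 6`; the left point is
handled by reflecting `t ↦ -t`. The three weights reproduce `f'(x)` exactly on quadratics, so the
stencil error is `β₋₁ R(x - h₋) + β₁ R(x + h₊)`, and
`|β₋₁| h₋³ + β₁ h₊³ = h₋ h₊ (h₋ + h₊) / (h₋ + h₊) = h₋ h₊`.
-/

open Set

lemma hasDerivAt_div_mul_sub_pow (C c : ℝ) (n : ℕ) (t : ℝ) :
    HasDerivAt (fun t => C / (n + 1) * (t - c) ^ (n + 1)) (C * (t - c) ^ n) t := by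
  refine ((((hasDerivAt_id' t).sub_const c).fun_pow (n + 1)).const_mul (C / (n + 1))).congr_deriv
    ?_
  push_cast
  field_simp

lemma abs_sub_le_of_abs_deriv_le_pow {g g' : ℝ → ℝ} {c b C : ℝ} {n : ℕ}
    (hg : ∀ t ∈ Icc c b, HasDerivWithinAt g (g' t) (Icc c b) t)
    (hbound : ∀ t ∈ Icc c b, |g' t| ≤ C * (t - c) ^ n) :
    ∀ t ∈ Icc c b, |g t - g c| ≤ C / (n + 1) * (t - c) ^ (n + 1) := by
  have hcont : ContinuousOn (fun t => g t - g c) (Icc c b) :=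
    fun t ht => (hg t ht).continuousWithinAt.sub continuousWithinAt_const
  have hderiv : ∀ t ∈ Ico c b, HasDerivWithinAt (fun t => g t - g c) (g' t) (Ici t) t :=
    fun t ht => ((hg t (Ico_subset_Icc_self ht)).mono_of_mem_nhdsWithin
      (Icc_mem_nhdsGE_of_mem ht)).sub_const _
  intro t ht
  simpa using image_norm_le_of_norm_deriv_right_le_deriv_boundary hcont hderiv (by simp)
    (hasDerivAt_div_mul_sub_pow C c n) (fun s hs => hbound s (Ico_subset_Icc_self hs)) ht

noncomputable def taylorRemainderTwo (f f' f'' : ℝ → ℝ) (c t : ℝ) : ℝ :=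
  f t - f c - f' c * (t - c) - f'' c * (t - c) ^ 2 / 2

section Taylor

variable {f f' f'' f''' : ℝ → ℝ} {a b c M : ℝ}

lemma abs_taylorRemainderTwo_le_of_le
    (hf : ∀ y ∈ Icc c b, HasDerivWithinAt f (f' y) (Icc c b) y)
    (hf' : ∀ y ∈ Icc c b, HasDerivWithinAt f' (f'' y) (Icc c b) y)
    (hf'' : ∀ y ∈ Icc c b, HasDerivWithinAt f'' (f''' y) (Icc c b) y)
    (hM : ∀ y ∈ Icc c b, |f''' y| ≤ M) :
    ∀ t ∈ Icc c b, |taylorRemainderTwo f f' f'' c t| ≤ M / 6 * (t - c) ^ 3 := by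
  have hlin : ∀ t, HasDerivAt (fun t => t - c) 1 t := fun t => (hasDerivAt_id' t).sub_const c
  have taylor_f'' := abs_sub_le_of_abs_deriv_le_pow (n := 0) (C := M) hf'' (by simpa using hM)
  have taylor_f' := abs_sub_le_of_abs_deriv_le_pow (n := 1) (C := M)
    (g := fun t => f' t - f'' c * (t - c)) (g' := fun t => f'' t - f'' c)
    (fun t ht => ((hf' t ht).sub ((hlin t).const_mul (f'' c)).hasDerivWithinAt).congr_deriv
      (by ring))
    (fun t ht => by simpa using taylor_f'' t ht)
  have taylor_f := abs_sub_le_of_abs_deriv_le_pow (n := 2) (C := M / 2)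
    (g := fun t => f t - f' c * (t - c) - f'' c * (t - c) ^ 2 / 2)
    (g' := fun t => f' t - f' c - f'' c * (t - c))
    (fun t ht => (((hf t ht).sub ((hlin t).const_mul (f' c)).hasDerivWithinAt).sub
      ((((hlin t).fun_pow 2).const_mul (f'' c)).div_const 2).hasDerivWithinAt).congr_deriv
      (by ring))
    (fun t ht => by
      have := taylor_f' t ht
      simp only [sub_self, mul_zero, sub_zero] at this
      convert this using 2 <;> ring)
  intro t ht
  convert taylor_f t ht using 2
  · simp only [taylorRemainderTwo]; ring
  · norm_num; ring

lemma hasDerivWithinAt_comp_neg_Icc {g g' : ℝ → ℝ}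
    (hg : ∀ y ∈ Icc a c, HasDerivWithinAt g (g' y) (Icc a c) y) :
    ∀ u ∈ Icc (-c) (-a), HasDerivWithinAt (fun u => g (-u)) (-g' (-u)) (Icc (-c) (-a)) u := by
  have hmaps : MapsTo (fun u : ℝ => -u) (Icc (-c) (-a)) (Icc a c) :=
    fun _ hu => neg_mem_Icc_iff.2 hu
  intro u hu
  exact ((hg (-u) (hmaps hu)).comp u (hasDerivAt_neg' u).hasDerivWithinAt hmaps).congr_deriv
    (mul_neg_one _)

lemma abs_taylorRemainderTwo_le_of_ge
    (hf : ∀ y ∈ Icc a c, HasDerivWithinAt f (f' y) (Icc a c) y)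
    (hf' : ∀ y ∈ Icc a c, HasDerivWithinAt f' (f'' y) (Icc a c) y)
    (hf'' : ∀ y ∈ Icc a c, HasDerivWithinAt f'' (f''' y) (Icc a c) y)
    (hM : ∀ y ∈ Icc a c, |f''' y| ≤ M) :
    ∀ t ∈ Icc a c, |taylorRemainderTwo f f' f'' c t| ≤ M / 6 * (c - t) ^ 3 := by
  have key := abs_taylorRemainderTwo_le_of_le (f := fun u => f (-u)) (f' := fun u => -f' (-u))
    (f'' := fun u => f'' (-u)) (f''' := fun u => -f''' (-u)) (M := M)
    (hasDerivWithinAt_comp_neg_Icc hf)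
    (fun u hu => (hasDerivWithinAt_comp_neg_Icc hf' u hu).neg.congr_deriv (neg_neg _))
    (hasDerivWithinAt_comp_neg_Icc hf'')
    (fun u hu => by simpa using hM (-u) (neg_mem_Icc_iff.2 hu))
  intro t ht
  convert key (-t) (neg_mem_Icc_iff.2 (by simpa using ht)) using 2
  · simp only [taylorRemainderTwo, neg_neg]; ring
  · ring

lemma abs_taylorRemainderTwo_le
    (hf : ∀ y ∈ Icc a b, HasDerivWithinAt f (f' y) (Icc a b) y)
    (hf' : ∀ y ∈ Icc a b, HasDerivWithinAt f' (f'' y) (Icc a b) y)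
    (hf'' : ∀ y ∈ Icc a b, HasDerivWithinAt f'' (f''' y) (Icc a b) y)
    (hM : ∀ y ∈ Icc a b, |f''' y| ≤ M) (hc : c ∈ Icc a b) :
    ∀ t ∈ Icc a b, |taylorRemainderTwo f f' f'' c t| ≤ M / 6 * |t - c| ^ 3 := by
  have restrict {a' b' : ℝ} (hsub : Icc a' b' ⊆ Icc a b) {F F' : ℝ → ℝ}
      (hF : ∀ y ∈ Icc a b, HasDerivWithinAt F (F' y) (Icc a b) y) :
      ∀ y ∈ Icc a' b', HasDerivWithinAt F (F' y) (Icc a' b') y :=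
    fun y hy => (hF y (hsub hy)).mono hsub
  intro t ht
  rcases le_total c t with hct | htc
  · have hsub : Icc c b ⊆ Icc a b := Icc_subset_Icc_left hc.1
    rw [abs_of_nonneg (sub_nonneg.2 hct)]
    exact abs_taylorRemainderTwo_le_of_le (restrict hsub hf) (restrict hsub hf')
      (restrict hsub hf'') (fun y hy => hM y (hsub hy)) t ⟨hct, ht.2⟩
  · have hsub : Icc a c ⊆ Icc a b := Icc_subset_Icc_right hc.2
    rw [abs_of_nonpos (sub_nonpos.2 htc), neg_sub]
    exact abs_taylorRemainderTwo_le_of_ge (restrict hsub hf) (restrict hsub hf')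
      (restrict hsub hf'') (fun y hy => hM y (hsub hy)) t ⟨ht.1, htc⟩

end Taylor

lemma nonuniform_central_difference_sub_eq (f f' f'' : ℝ → ℝ) {x hm hp : ℝ} (hhm : hm ≠ 0)
    (hhp : hp ≠ 0) (hmp : hm + hp ≠ 0) :
    (-hp / (hm * (hm + hp))) * f (x - hm) + ((hp - hm) / (hm * hp)) * f x +
        (hm / (hp * (hm + hp))) * f (x + hp) - f' x =
      (-hp / (hm * (hm + hp))) * taylorRemainderTwo f f' f'' x (x - hm) +
        (hm / (hp * (hm + hp))) * taylorRemainderTwo f f' f'' x (x + hp) := by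
  simp only [taylorRemainderTwo]
  field_simp
  ring

/-- for `f` three times continuously differentiable on
`[x - h₋, x + h₊]`, the non-uniform central first-derivative approximation is
second-order accurate, with error bounded by `(h₋ h₊ / 6) sup |f'''|`. -/
theorem nonuniform_first_derivative_error_bound
    (x hm hp : ℝ) (hhm : 0 < hm) (hhp : 0 < hp)
    (f f' f'' f''' : ℝ → ℝ)
    (hf : ∀ y ∈ Set.Icc (x - hm) (x + hp),
      HasDerivWithinAt f (f' y) (Set.Icc (x - hm) (x + hp)) y)
    (hf' : ∀ y ∈ Set.Icc (x - hm) (x + hp),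
      HasDerivWithinAt f' (f'' y) (Set.Icc (x - hm) (x + hp)) y)
    (hf'' : ∀ y ∈ Set.Icc (x - hm) (x + hp),
      HasDerivWithinAt f'' (f''' y) (Set.Icc (x - hm) (x + hp)) y)
    (hcont : ContinuousOn f''' (Set.Icc (x - hm) (x + hp))) :
    |(-hp / (hm * (hm + hp))) * f (x - hm) + ((hp - hm) / (hm * hp)) * f x +
        (hm / (hp * (hm + hp))) * f (x + hp) - f' x| ≤
      hm * hp / 6 * sSup ((fun y => |f''' y|) '' Set.Icc (x - hm) (x + hp)) := by
  set M := sSup ((fun y => |f''' y|) '' Icc (x - hm) (x + hp))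
  have hM : ∀ y ∈ Icc (x - hm) (x + hp), |f''' y| ≤ M := fun y hy =>
    le_csSup (isCompact_Icc.image_of_continuousOn hcont.abs).bddAbove (mem_image_of_mem _ hy)
  have taylor := abs_taylorRemainderTwo_le (c := x) hf hf' hf'' hM ⟨by linarith, by linarith⟩
  have hminus := taylor (x - hm) ⟨le_rfl, by linarith⟩
  have hplus := taylor (x + hp) ⟨by linarith, le_rfl⟩
  rw [sub_sub_cancel_left, abs_neg, abs_of_pos hhm] at hminus
  rw [add_sub_cancel_left, abs_of_pos hhp] at hplus
  rw [nonuniform_central_difference_sub_eq f f' f'' hhm.ne' hhp.ne' (by positivity)]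
  calc _ ≤ hp / (hm * (hm + hp)) * |taylorRemainderTwo f f' f'' x (x - hm)| +
        hm / (hp * (hm + hp)) * |taylorRemainderTwo f f' f'' x (x + hp)| := by
        refine (abs_add_le _ _).trans_eq ?_
        rw [abs_mul, abs_mul, abs_div, abs_div, abs_neg, abs_of_pos hhp, abs_of_pos hhm,
          abs_of_pos (by positivity : 0 < hm * (hm + hp)),
          abs_of_pos (by positivity : 0 < hp * (hm + hp))]
    _ ≤ hp / (hm * (hm + hp)) * (M / 6 * hm ^ 3) + hm / (hp * (hm + hp)) * (M / 6 * hp ^ 3) := by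
        gcongr
    _ = hm * hp / 6 * M := by
        field_simp
end
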